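/- Let (G,σ) be a signed graph. For every vertex v ∈ V(G), we have ψ(G,σ) − 2 ≤ ψ(G−v,σ) ≤ ψ(G,σ), where (G−v,σ) is the signed graph obtained by deleting v (and all edges incident to v) and restricting σ. -/
import Mathlib


open SimpleGraph

/-- A signature on a graph: a symmetric assignment of signs (`1` or `-1`) to pairs of
vertices (only the values on edges are relevant). -/
def IsSignature {V : Type*} (σ : V → V → ℤ) : Prop :=
  (∀ u v, σ u v = σ v u) ∧ (∀ u v, σ u v = 1 ∨ σ u v = -1)

/-- `σ'` is obtained from `σ` by switching a set of vertices: every vertex gets a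
switching value `±1`, and the sign of an edge is multiplied by the values at its ends. -/
def SwitchEquiv {V : Type*} (σ σ' : V → V → ℤ) : Prop :=
  ∃ s : V → ℤ, (∀ v, s v = 1 ∨ s v = -1) ∧ ∀ u v, σ' u v = s u * s v * σ u v

/-- The colour set `M_k`, as a set of integers: `{±1, …, ±n}` if `k = 2n`, and
`{-n, …, -1, 0, 1, …, n}` if `k = 2n+1` (colour `±0` is represented by `0`). -/
def colourSet (k : ℕ) : Set ℤ :=
  if Even k then {i | i ≠ 0 ∧ i.natAbs ≤ k / 2} else {i | i.natAbs ≤ k / 2}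

/-- A proper `k`-colouring of the signed graph `(G, σ)`: colours come from `M_k` and,
for each edge `uv`, `φ u ≠ σ(uv) · φ v`. -/
def IsProperColouring {V : Type*} (G : SimpleGraph V) (σ : V → V → ℤ) (k : ℕ)
    (φ : V → ℤ) : Prop :=
  (∀ v, φ v ∈ colourSet k) ∧ ∀ u v, G.Adj u v → φ u ≠ σ u v * φ v

/-- The sign of an integer for the purpose of switching: `-1` for negative colours,
`1` otherwise. -/
def isgn (x : ℤ) : ℤ := if x < 0 then -1 else 1

/-- The sign of the edge `uv` after switching every vertex whose colour is negative. -/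
def redSign {V : Type*} (σ : V → V → ℤ) (φ : V → ℤ) (u v : V) : ℤ :=
  isgn (φ u) * isgn (φ v) * σ u v

/-- After switching all negatively-coloured vertices and taking absolute values of
colours, there is an edge of `(G, σ)` whose ends get values `i` and `j` and whose
resulting sign is `s`. -/
def HasEdgeType {V : Type*} (G : SimpleGraph V) (σ : V → V → ℤ) (φ : V → ℤ)
    (i j : ℕ) (s : ℤ) : Prop :=
  ∃ u v, G.Adj u v ∧ (φ u).natAbs = i ∧ (φ v).natAbs = j ∧ redSign σ φ u v = s

/-- A complete `k`-colouring of the signed graph `(G, σ)`. -/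
def IsCompleteColouring {V : Type*} (G : SimpleGraph V) (σ : V → V → ℤ) (k : ℕ)
    (φ : V → ℤ) : Prop :=
  IsProperColouring G σ k φ ∧
  (∀ i j : ℕ, (i : ℤ) ∈ colourSet k → (j : ℤ) ∈ colourSet k → i ≠ j →
    HasEdgeType G σ φ i j 1 ∧ HasEdgeType G σ φ i j (-1)) ∧
  (∀ i : ℕ, 1 ≤ i → (i : ℤ) ∈ colourSet k → HasEdgeType G σ φ i i (-1))

/-- Some signed graph equivalent to `(G, σ)` admits a complete `k`-colouring. -/
def AdmitsComplete {V : Type*} (G : SimpleGraph V) (σ : V → V → ℤ) (k : ℕ) : Prop :=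
  ∃ σ', IsSignature σ' ∧ SwitchEquiv σ σ' ∧ ∃ φ, IsCompleteColouring G σ' k φ

/-- The achromatic number of the signed graph `(G, σ)`: the largest `k` such that some
signed graph equivalent to `(G, σ)` admits a complete `k`-colouring. -/
noncomputable def psi {V : Type*} (G : SimpleGraph V) (σ : V → V → ℤ) : ℕ :=
  sSup {k | AdmitsComplete G σ k}

/-- The chromatic number of the signed graph `(G, σ)`: the smallest `k` such that
`(G, σ)` admits a proper `k`-colouring. -/
noncomputable def chi {V : Type*} (G : SimpleGraph V) (σ : V → V → ℤ) : ℕ :=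
  sInf {k | ∃ φ, IsProperColouring G σ k φ}

section Helpers

variable {V : Type*}

lemma isgn_cases (x : ℤ) : isgn x = 1 ∨ isgn x = -1 := by
  unfold isgn; split <;> simp

lemma isgn_mul_self (x : ℤ) : isgn x * isgn x = 1 := by
  rcases isgn_cases x with h | h <;> rw [h] <;> ring

lemma isgn_natCast (m : ℕ) : isgn (m : ℤ) = 1 := by
  unfold isgn; rw [if_neg]; omega

lemma isgn_mul_natAbs (x : ℤ) : isgn x * (x.natAbs : ℤ) = x := by
  unfold isgn; split <;> omega

lemma natAbs_unit_mul {e : ℤ} (he : e = 1 ∨ e = -1) (x : ℤ) :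
    (e * x).natAbs = x.natAbs := by
  rcases he with h | h <;> subst h <;> simp

lemma isgn_unit_mul {e : ℤ} (he : e = 1 ∨ e = -1) {x : ℤ} (hx : x ≠ 0) :
    isgn (e * x) = e * isgn x := by
  rcases he with h | h <;> subst h <;> unfold isgn <;> split_ifs <;> omega

lemma unit_mul_ne {e x y : ℤ} (he : e = 1 ∨ e = -1) :
    x ≠ e * y ↔ e * x ≠ y := by
  rcases he with h | h <;> subst h <;>
    simp only [one_mul, neg_mul, ne_eq] <;> constructor <;> intro h' <;> omega

lemma unit_mul_eq {e x y : ℤ} (he : e = 1 ∨ e = -1) (h : e * x = y) : x = e * y := by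
  rcases he with h' | h' <;> subst h' <;> omega

lemma mem_colourSet_iff {k : ℕ} {x : ℤ} :
    x ∈ colourSet k ↔ ((k % 2 = 0 → x ≠ 0) ∧ x.natAbs ≤ k / 2) := by
  unfold colourSet
  split_ifs with h
  · rw [Nat.even_iff] at h
    simp only [Set.mem_setOf_eq]
    tauto
  · rw [Nat.even_iff] at h
    simp only [Set.mem_setOf_eq]
    constructor
    · intro hx; exact ⟨fun h2 => absurd h2 h, hx⟩
    · tauto

lemma mem_colourSet_ofNat {k i : ℕ} (h0 : k % 2 = 0 → i ≠ 0) (hle : i ≤ k / 2) :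
    ((i : ℕ) : ℤ) ∈ colourSet k := by
  rw [mem_colourSet_iff]
  exact ⟨fun he => by simpa using h0 he, by simpa using hle⟩

lemma mem_colourSet_ofNat' {k i : ℕ} (h : ((i : ℕ) : ℤ) ∈ colourSet k) :
    (k % 2 = 0 → i ≠ 0) ∧ i ≤ k / 2 := by
  rw [mem_colourSet_iff] at h
  exact ⟨fun he => by simpa using h.1 he, by simpa using h.2⟩

end Helpers
section EdgeHelpers

variable {V : Type*} {G : SimpleGraph V} {σ : V → V → ℤ} {φ ψ : V → ℤ}

lemma hasEdgeType_symm (hsym : ∀ u w, σ u w = σ w u) {i j : ℕ} {s : ℤ}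
    (h : HasEdgeType G σ φ i j s) : HasEdgeType G σ φ j i s := by
  obtain ⟨u, w, hadj, hu, hw, hs⟩ := h
  exact ⟨w, u, hadj.symm, hw, hu, by
    unfold redSign at hs ⊢; rw [hsym w u]; rw [← hs]; ring⟩

lemma hasEdgeType_congr {i j : ℕ} {s : ℤ}
    (h : HasEdgeType G σ ψ i j s)
    (hi : ∀ u, (ψ u).natAbs = i → φ u = ψ u)
    (hj : ∀ u, (ψ u).natAbs = j → φ u = ψ u) :
    HasEdgeType G σ φ i j s := by
  obtain ⟨u, w, hadj, hu, hw, hs⟩ := h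
  refine ⟨u, w, hadj, ?_, ?_, ?_⟩
  · rw [hi u hu]; exact hu
  · rw [hj w hw]; exact hw
  · unfold redSign at hs ⊢; rw [hi u hu, hj w hw]; exact hs

lemma evidence_hasEdgeType (hpm : ∀ u w, σ u w = 1 ∨ σ u w = -1)
    {t u : V} (hadj : G.Adj t u) {c : ℤ} (hc : σ t u * φ u = c) (hc0 : c ≠ 0) :
    HasEdgeType G σ φ (φ t).natAbs c.natAbs (isgn (φ t) * isgn c) := by
  have hσ := hpm t u
  have hu : φ u = σ t u * c := unit_mul_eq hσ hc
  refine ⟨t, u, hadj, rfl, ?_, ?_⟩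
  · rw [hu, natAbs_unit_mul hσ]
  · unfold redSign
    rw [hu, isgn_unit_mul hσ hc0]
    rcases hσ with h | h <;> rw [h] <;> ring

/-- From "all colours of absolute value `j` are blocked at `t`", get edge types
`(|φ t|, j)` with both signs. -/
lemma stuck_types (hpm : ∀ u w, σ u w = 1 ∨ σ u w = -1) {t : V} {j : ℕ}
    (hstuck : ∀ c : ℤ, c ≠ 0 → c.natAbs = j → ∃ u, G.Adj t u ∧ σ t u * φ u = c)
    (hj : 1 ≤ j) {s : ℤ} (hs : s = 1 ∨ s = -1) :
    HasEdgeType G σ φ (φ t).natAbs j s := by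
  set c : ℤ := isgn (φ t) * s * (j : ℤ) with hcdef
  have he : isgn (φ t) * s = 1 ∨ isgn (φ t) * s = -1 := by
    rcases isgn_cases (φ t) with h | h <;> rcases hs with h' | h' <;>
      rw [h, h'] <;> simp
  have hc0 : c ≠ 0 := by
    rcases he with h | h <;> rw [hcdef, h] <;> simp <;> omega
  have hcabs : c.natAbs = j := by
    rw [hcdef, natAbs_unit_mul he]; simp
  obtain ⟨u, hadj, hcu⟩ := hstuck c hc0 hcabs
  have := evidence_hasEdgeType hpm hadj hcu hc0
  rw [hcabs] at this
  have hsgn : isgn (φ t) * isgn c = s := by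
    have hj0 : (j : ℤ) ≠ 0 := by
      simp only [ne_eq, Nat.cast_eq_zero]; omega
    rw [hcdef, isgn_unit_mul he hj0, isgn_natCast, mul_one, ← mul_assoc,
      isgn_mul_self, one_mul]
  rwa [hsgn] at this

/-- An edge between two vertices of the same nonzero absolute value has reduced
sign `-1` in any proper colouring. -/
lemma inner_edge_type (hsym : ∀ u w, σ u w = σ w u) (hpm : ∀ u w, σ u w = 1 ∨ σ u w = -1)
    (hprop : ∀ u w, G.Adj u w → φ u ≠ σ u w * φ w)
    {t1 t2 : V} (hadj : G.Adj t1 t2) {m : ℕ}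
    (h1 : (φ t1).natAbs = m) (h2 : (φ t2).natAbs = m) (hm : 1 ≤ m) :
    HasEdgeType G σ φ m m (-1) := by
  have hσ := hpm t1 t2
  have hne := hprop t1 t2 hadj
  have habs : (φ t1).natAbs = (σ t1 t2 * φ t2).natAbs := by
    rw [natAbs_unit_mul hσ, h1, h2]
  have heq : φ t1 = - (σ t1 t2 * φ t2) := by
    rcases Int.natAbs_eq_natAbs_iff.mp habs with h | h
    · exact absurd h hne
    · exact h
  have h20 : φ t2 ≠ 0 := by intro h; rw [h] at h2; simp at h2; omega
  refine ⟨t1, t2, hadj, h1, h2, ?_⟩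
  unfold redSign
  have : isgn (φ t1) = - (σ t1 t2 * isgn (φ t2)) := by
    rw [heq]
    rw [show -(σ t1 t2 * φ t2) = (-σ t1 t2) * φ t2 by ring]
    have hσ' : -σ t1 t2 = 1 ∨ -σ t1 t2 = -1 := by rcases hσ with h | h <;> rw [h] <;> simp
    rw [isgn_unit_mul hσ' h20]; ring
  rw [this]
  have := isgn_mul_self (φ t2)
  rcases hσ with h | h <;> rw [h] <;> nlinarith [isgn_mul_self (φ t2)]

end EdgeHelpers
section Max

open Classical in
/-- Maximal recolouring lemma: recolour vertices of `W` with colours from `P`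
greedily; any vertex of `W` left uncoloured has all colours of `P` blocked. -/
lemma exists_max_recolour {V : Type*} [Finite V] (H : SimpleGraph V) (σ : V → V → ℤ)
    (hsym : ∀ u w, σ u w = σ w u) (hpm : ∀ u w, σ u w = 1 ∨ σ u w = -1)
    (P : Set ℤ) (W : Set V) (φ₀ : V → ℤ)
    (hP : ∀ w ∈ W, φ₀ w ∉ P)
    (hprop : ∀ u w, H.Adj u w → φ₀ u ≠ σ u w * φ₀ w) :
    ∃ φ : V → ℤ,
      (∀ u, u ∉ W → φ u = φ₀ u) ∧
      (∀ u ∈ W, φ u = φ₀ u ∨ φ u ∈ P) ∧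
      (∀ u w, H.Adj u w → φ u ≠ σ u w * φ w) ∧
      (∀ t ∈ W, φ t = φ₀ t → ∀ c ∈ P, ∃ u, H.Adj t u ∧ σ t u * φ u = c) := by
  classical
  suffices h : ∀ (m : ℕ) (φ : V → ℤ),
      (∀ u, u ∉ W → φ u = φ₀ u) →
      (∀ u ∈ W, φ u = φ₀ u ∨ φ u ∈ P) →
      (∀ u w, H.Adj u w → φ u ≠ σ u w * φ w) →
      ({t | t ∈ W ∧ φ t = φ₀ t}.ncard ≤ m) →
      ∃ φf : V → ℤ,
        (∀ u, u ∉ W → φf u = φ₀ u) ∧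
        (∀ u ∈ W, φf u = φ₀ u ∨ φf u ∈ P) ∧
        (∀ u w, H.Adj u w → φf u ≠ σ u w * φf w) ∧
        (∀ t ∈ W, φf t = φ₀ t → ∀ c ∈ P, ∃ u, H.Adj t u ∧ σ t u * φf u = c) by
    exact h _ φ₀ (fun _ _ => rfl) (fun u _ => Or.inl rfl) hprop le_rfl
  intro m
  induction m with
  | zero =>
    intro φ h1 h2 h3 hcard
    refine ⟨φ, h1, h2, h3, fun t ht hft => ?_⟩
    exfalso
    have : t ∈ {t | t ∈ W ∧ φ t = φ₀ t} := ⟨ht, hft⟩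
    have hne : {t | t ∈ W ∧ φ t = φ₀ t}.Nonempty := ⟨t, this⟩
    have := (Set.ncard_pos (Set.toFinite _)).mpr hne
    omega
  | succ m ih =>
    intro φ h1 h2 h3 hcard
    by_cases hstuck : ∀ t ∈ W, φ t = φ₀ t → ∀ c ∈ P, ∃ u, H.Adj t u ∧ σ t u * φ u = c
    · exact ⟨φ, h1, h2, h3, hstuck⟩
    · push_neg at hstuck
      obtain ⟨t, htW, htφ, c, hcP, hfree⟩ := hstuck
      set φ' := Function.update φ t c with hφ'
      have hφ't : φ' t = c := Function.update_self t c φ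
      have hφ'u : ∀ u, u ≠ t → φ' u = φ u := fun u hu => Function.update_of_ne hu c φ
      have h1' : ∀ u, u ∉ W → φ' u = φ₀ u := by
        intro u hu
        rw [hφ'u u (fun h => hu (h ▸ htW))]; exact h1 u hu
      have h2' : ∀ u ∈ W, φ' u = φ₀ u ∨ φ' u ∈ P := by
        intro u hu
        by_cases h : u = t
        · subst h; right; rw [hφ't]; exact hcP
        · rw [hφ'u u h]; exact h2 u hu
      have h3' : ∀ u w, H.Adj u w → φ' u ≠ σ u w * φ' w := by
        intro u w hadj
        by_cases hu : u = t
        · subst hu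
          have hwt : w ≠ u := (hadj.ne).symm
          rw [hφ't, hφ'u w hwt]
          intro h
          exact hfree w hadj h.symm
        · by_cases hw : w = t
          · rw [hw] at hadj ⊢
            rw [hφ't, hφ'u u hu]
            rw [unit_mul_ne (hpm u t)]
            intro h
            apply hfree u hadj.symm
            rw [hsym t u]; exact h
          · rw [hφ'u u hu, hφ'u w hw]; exact h3 u w hadj
      have hmono : {t' | t' ∈ W ∧ φ' t' = φ₀ t'} ⊂ {t' | t' ∈ W ∧ φ t' = φ₀ t'} := by
        constructor
        · intro x hx
          obtain ⟨hxW, hxφ⟩ := hx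
          by_cases h : x = t
          · subst h
            rw [hφ't] at hxφ
            exact absurd (hxφ ▸ hcP) (hP x hxW)
          · exact ⟨hxW, by rw [hφ'u x h] at hxφ; exact hxφ⟩
        · intro hsub
          have ht' : t ∈ {t' | t' ∈ W ∧ φ t' = φ₀ t'} := ⟨htW, htφ⟩
          have := hsub ht'
          obtain ⟨_, habs⟩ := this
          rw [hφ't] at habs
          exact hP t htW (habs ▸ hcP)
      have hlt := Set.ncard_lt_ncard hmono (Set.toFinite _)
      exact ih φ' h1' h2' h3' (by omega)
section Infra

variable {V : Type*}

lemma switch_signature {s : V → ℤ} (hs : ∀ u, s u = 1 ∨ s u = -1)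
    {σ : V → V → ℤ} (hσ : IsSignature σ) :
    IsSignature (fun u w => s u * s w * σ u w) := by
  constructor
  · intro u w; simp only; rw [hσ.1 u w]; ring
  · intro u w
    simp only
    rcases hs u with h1 | h1 <;> rcases hs w with h2 | h2 <;>
      rcases hσ.2 u w with h3 | h3 <;> rw [h1, h2, h3] <;> norm_num

lemma switch_equiv_self {s : V → ℤ} (hs : ∀ u, s u = 1 ∨ s u = -1) (σ : V → V → ℤ) :
    SwitchEquiv σ (fun u w => s u * s w * σ u w) :=
  ⟨s, hs, fun _ _ => rfl⟩

lemma induce_adj' {G : SimpleGraph V} {s : Set V} {p q : s} :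
    (G.induce s).Adj p q ↔ G.Adj p.1 q.1 := Iff.rfl

/-- Transfer an edge type from `G` to the graph induced by deleting `v`, provided the
deleted vertex cannot be a witness endpoint. -/
lemma hasEdgeType_restrict {G : SimpleGraph V} {σ' : V → V → ℤ} {ψ : V → ℤ} {v : V}
    {i j : ℕ} {s : ℤ} (h : HasEdgeType G σ' ψ i j s)
    (hvi : (ψ v).natAbs ≠ i) (hvj : (ψ v).natAbs ≠ j) :
    HasEdgeType (G.induce {u | u ≠ v}) (fun p q => σ' p.1 q.1) (fun p => ψ p.1) i j s := by
  obtain ⟨u, w, hadj, hu, hw, hs⟩ := h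
  have hu' : u ≠ v := fun h => hvi (h ▸ hu)
  have hw' : w ≠ v := fun h => hvj (h ▸ hw)
  exact ⟨⟨u, hu'⟩, ⟨w, hw'⟩, hadj, hu, hw, hs⟩

/-- Transfer an edge type from the graph induced by deleting `v` back to `G`. -/
lemma hasEdgeType_lift {G : SimpleGraph V} {v : V} {σr : {u // u ≠ v} → {u // u ≠ v} → ℤ}
    {φ : {u // u ≠ v} → ℤ} {σ' : V → V → ℤ} {φ' : V → ℤ}
    {i j : ℕ} {s : ℤ} (h : HasEdgeType (G.induce {u | u ≠ v}) σr φ i j s)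
    (hφ : ∀ p : {u // u ≠ v}, φ' p.1 = φ p)
    (hσ : ∀ p q : {u // u ≠ v}, σ' p.1 q.1 = σr p q) :
    HasEdgeType G σ' φ' i j s := by
  obtain ⟨p, q, hadj, hp, hq, hs⟩ := h
  refine ⟨p.1, q.1, hadj, by rw [hφ p]; exact hp, by rw [hφ q]; exact hq, ?_⟩
  unfold redSign at hs ⊢
  rw [hφ p, hφ q, hσ p q]; exact hs

lemma bddAbove_admits [Fintype V] (G : SimpleGraph V) (σ : V → V → ℤ) :
    BddAbove {k | AdmitsComplete G σ k} := by
  classical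
  refine ⟨2 * Fintype.card V + 1, fun k hk => ?_⟩
  obtain ⟨σ', _, _, φ, ⟨⟨hmem, _⟩, _, hdiag⟩⟩ := hk
  by_cases hk2 : k ≤ 1
  · omega
  · have hsub : Finset.Icc 1 (k / 2) ⊆ Finset.image (fun u => (φ u).natAbs) Finset.univ := by
      intro i hi
      rw [Finset.mem_Icc] at hi
      have hmem' : ((i : ℕ) : ℤ) ∈ colourSet k := by
        rw [mem_colourSet_iff]
        constructor
        · intro _ h0
          have : i = 0 := by exact_mod_cast h0
          omega
        · simpa using hi.2
      obtain ⟨u, w, _, hu, _, _⟩ := hdiag i hi.1 hmem'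
      simp only [Finset.mem_image, Finset.mem_univ, true_and]
      exact ⟨u, hu⟩
    have h1 := Finset.card_le_card hsub
    have h2 := Finset.card_image_le (f := fun u => (φ u).natAbs) (s := Finset.univ)
    rw [Nat.card_Icc] at h1
    simp only [Finset.card_univ] at h2
    omega

end Infra
section Up

variable {V : Type*}

lemma natAbs_ne {x y : ℤ} (h : x.natAbs ≠ y.natAbs) : x ≠ y := fun he => h (he ▸ rfl)

lemma admits_up [Fintype V] (G : SimpleGraph V) (σ : V → V → ℤ)
    (hσ : IsSignature σ) (v : V) (k : ℕ)
    (h : AdmitsComplete (G.induce {u | u ≠ v}) (fun a b => σ a.1 b.1) k) :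
    AdmitsComplete G σ k ∨ AdmitsComplete G σ (k + 1) := by
  classical
  obtain ⟨σ'', hsig'', hsw'', φ, ⟨⟨hmem, hprop⟩, hpairs, hdiag⟩⟩ := h
  obtain ⟨s₀, hs₀, hσ''⟩ := hsw''
  set s : V → ℤ := fun u => if h : u = v then 1 else s₀ ⟨u, h⟩ with hsdef
  have hs : ∀ u, s u = 1 ∨ s u = -1 := by
    intro u; simp only [hsdef]; by_cases h : u = v
    · rw [dif_pos h]; left; rfl
    · rw [dif_neg h]; exact hs₀ _
  set σ' : V → V → ℤ := fun u w => s u * s w * σ u w with hσ'def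
  have hsig' : IsSignature σ' := switch_signature hs hσ
  have hsw' : SwitchEquiv σ σ' := switch_equiv_self hs σ
  have hsym' := hsig'.1
  have hpm' := hsig'.2
  have hrestr : ∀ p q : {u // u ≠ v}, σ' p.1 q.1 = σ'' p q := by
    intro p q
    rw [hσ'' p q]
    simp only [hσ'def, hsdef, dif_neg p.2, dif_neg q.2, Subtype.coe_eta]
  set φe : V → ℤ := fun u => if h : u = v then 0 else φ ⟨u, h⟩ with hφedef
  have hφe : ∀ p : {u // u ≠ v}, φe p.1 = φ p := by
    intro p; simp only [hφedef, dif_neg p.2, Subtype.coe_eta]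
  have hφev : φe v = 0 := by simp only [hφedef]; simp
  have hmeme : ∀ u, u ≠ v → φe u ∈ colourSet k := by
    intro u hu
    have := hmem ⟨u, hu⟩
    rwa [← hφe ⟨u, hu⟩] at this
  have hpropG : ∀ x y, x ≠ v → y ≠ v → G.Adj x y → φe x ≠ σ' x y * φe y := by
    intro x y hx hy hadj
    have := hprop ⟨x, hx⟩ ⟨y, hy⟩ hadj
    rwa [← hφe ⟨x, hx⟩, ← hφe ⟨y, hy⟩, ← hrestr ⟨x, hx⟩ ⟨y, hy⟩] at this
  by_cases hfree : ∃ c ∈ colourSet k, ∀ u, G.Adj v u → σ' v u * φe u ≠ c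
  · -- extend with a free colour
    left
    obtain ⟨c, hcmem, hcfree⟩ := hfree
    set φ' : V → ℤ := fun u => if u = v then c else φe u with hφ'def
    have hφ'v : φ' v = c := by simp only [hφ'def]; simp
    have hφ'u : ∀ u, u ≠ v → φ' u = φe u := by
      intro u hu; simp only [hφ'def]; simp only [if_neg hu]
    refine ⟨σ', hsig', hsw', φ', ⟨⟨?_, ?_⟩, ?_, ?_⟩⟩
    · intro u
      by_cases hu : u = v
      · rw [hu, hφ'v]; exact hcmem
      · rw [hφ'u u hu]; exact hmeme u hu
    · intro x y hadj
      by_cases hx : x = v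
      · rw [hx] at hadj ⊢
        have hy : y ≠ v := hadj.ne'
        rw [hφ'v, hφ'u y hy]
        intro he; exact hcfree y hadj he.symm
      · by_cases hy : y = v
        · rw [hy] at hadj ⊢
          rw [hφ'v, hφ'u x hx, unit_mul_ne (hpm' x v)]
          intro he
          apply hcfree x hadj.symm
          rw [hsym' v x]; exact he
        · rw [hφ'u x hx, hφ'u y hy]; exact hpropG x y hx hy hadj
    · intro i j hi hj hij
      have hφ'p : ∀ p : {u // u ≠ v}, φ' p.1 = φ p := by
        intro p; rw [hφ'u p.1 p.2]; exact hφe p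
      obtain ⟨h1, h2⟩ := hpairs i j hi hj hij
      exact ⟨hasEdgeType_lift h1 hφ'p hrestr, hasEdgeType_lift h2 hφ'p hrestr⟩
    · intro i hi1 hi
      have hφ'p : ∀ p : {u // u ≠ v}, φ' p.1 = φ p := by
        intro p; rw [hφ'u p.1 p.2]; exact hφe p
      exact hasEdgeType_lift (hdiag i hi1 hi) hφ'p hrestr
  · -- all colours blocked at v
    right
    push_neg at hfree
    set n := k / 2 with hndef
    by_cases hke : k % 2 = 0
    · -- k even : colour v with 0, get a complete (k+1)-colouring
      have hk1 : (k + 1) / 2 = n := by omega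
      refine ⟨σ', hsig', hsw', φe, ⟨⟨?_, ?_⟩, ?_, ?_⟩⟩
      · intro u
        by_cases hu : u = v
        · rw [hu, hφev, mem_colourSet_iff]
          constructor
          · intro h0; omega
          · simp
        · have := hmeme u hu
          rw [mem_colourSet_iff] at this ⊢
          exact ⟨fun h0 => by omega, by omega⟩
      · intro x y hadj
        by_cases hx : x = v
        · rw [hx] at hadj ⊢
          have hy : y ≠ v := hadj.ne'
          rw [hφev]
          have h0 : φe y ≠ 0 := by
            have := hmeme y hy; rw [mem_colourSet_iff] at this; exact this.1 hke
          intro he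
          have : σ' v y * φe y ≠ 0 := by
            rcases hpm' v y with h | h <;> rw [h] <;> simpa using h0
          exact this he.symm
        · by_cases hy : y = v
          · rw [hy] at hadj ⊢
            rw [hφev, mul_zero]
            have := hmeme x hx; rw [mem_colourSet_iff] at this; exact this.1 hke
          · exact hpropG x y hx hy hadj
      · intro i j hi hj hij
        rw [mem_colourSet_iff] at hi hj
        have hjle : j ≤ n := by have := hj.2; simpa [hk1] using this
        have hile : i ≤ n := by have := hi.2; simpa [hk1] using this
        have key : ∀ jj : ℕ, 1 ≤ jj → jj ≤ n → ∀ sg : ℤ, sg = 1 ∨ sg = -1 →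
            HasEdgeType G σ' φe 0 jj sg := by
          intro jj hjj1 hjjn sg hsg
          have hstuck : ∀ c : ℤ, c ≠ 0 → c.natAbs = jj →
              ∃ u, G.Adj v u ∧ σ' v u * φe u = c := by
            intro c hc0 hcabs
            apply hfree c
            rw [mem_colourSet_iff]
            exact ⟨fun _ => hc0, by omega⟩
          have := stuck_types hpm' hstuck hjj1 hsg
          rwa [hφev] at this
        by_cases hi0 : i = 0
        · subst hi0
          have hj1 : 1 ≤ j := by omega
          exact ⟨key j hj1 hjle 1 (Or.inl rfl), key j hj1 hjle (-1) (Or.inr rfl)⟩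
        · by_cases hj0 : j = 0
          · subst hj0
            have hi1 : 1 ≤ i := by omega
            exact ⟨hasEdgeType_symm hsym' (key i hi1 hile 1 (Or.inl rfl)),
              hasEdgeType_symm hsym' (key i hi1 hile (-1) (Or.inr rfl))⟩
          · have hik : ((i : ℕ) : ℤ) ∈ colourSet k := by
              rw [mem_colourSet_iff]
              constructor
              · intro _; simpa using hi0
              · simpa using hile
            have hjk : ((j : ℕ) : ℤ) ∈ colourSet k := by
              rw [mem_colourSet_iff]
              constructor
              · intro _; simpa using hj0
              · simpa using hjle
            obtain ⟨h1, h2⟩ := hpairs i j hik hjk hij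
            exact ⟨hasEdgeType_lift h1 hφe hrestr, hasEdgeType_lift h2 hφe hrestr⟩
      · intro i hi1 hi
        rw [mem_colourSet_iff] at hi
        have hile : i ≤ n := by have := hi.2; simpa [hk1] using this
        have hik : ((i : ℕ) : ℤ) ∈ colourSet k := by
          rw [mem_colourSet_iff]
          refine ⟨fun _ => by simpa using (by omega : i ≠ 0), by simpa using hile⟩
        exact hasEdgeType_lift (hdiag i hi1 hik) hφe hrestr
    · -- k odd
      have hk1 : (k + 1) / 2 = n + 1 := by omega
      have h0mem : (0 : ℤ) ∈ colourSet k := by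
        rw [mem_colourSet_iff]; exact ⟨fun h => absurd h hke, by simp⟩
      obtain ⟨z, hzadj, hz0⟩ := hfree 0 h0mem
      have hz0' : φe z = 0 := by
        rcases hpm' v z with h | h <;> rw [h] at hz0 <;> omega
      set N : ℤ := (n : ℤ) + 1 with hNdef
      have hN0 : N ≠ 0 := by rw [hNdef]; positivity
      have hNabs : N.natAbs = n + 1 := by rw [hNdef]; omega
      have hisgnN : isgn N = 1 := by unfold isgn; rw [if_neg]; rw [hNdef]; omega
      set φ' : V → ℤ := fun x => if x = v then N
        else if φe x = 0 then (if G.Adj v x then -σ' v x * N else N) else φe x with hφ'def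
      have hφ'v : φ' v = N := by simp only [hφ'def]; simp
      have hφ'z : ∀ x, x ≠ v → φe x = 0 → G.Adj v x → φ' x = -σ' v x * N := by
        intro x hx h0 hadj; simp only [hφ'def]; simp only [if_neg hx, if_pos h0, if_pos hadj]
      have hφ'z' : ∀ x, x ≠ v → φe x = 0 → ¬ G.Adj v x → φ' x = N := by
        intro x hx h0 hadj; simp only [hφ'def]; simp only [if_neg hx, if_pos h0, if_neg hadj]
      have hφ'x : ∀ x, x ≠ v → φe x ≠ 0 → φ' x = φe x := by
        intro x hx h0; simp only [hφ'def]; simp only [if_neg hx, if_neg h0]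
      have habs' : ∀ x, x ≠ v → φe x = 0 → (φ' x).natAbs = n + 1 := by
        intro x hx h0
        by_cases hadj : G.Adj v x
        · rw [hφ'z x hx h0 hadj]
          have he : -σ' v x = 1 ∨ -σ' v x = -1 := by
            rcases hpm' v x with h | h <;> rw [h] <;> simp
          rw [natAbs_unit_mul he, hNabs]
        · rw [hφ'z' x hx h0 hadj, hNabs]
      have habsle : ∀ x, x ≠ v → φe x ≠ 0 → (φ' x).natAbs ≤ n := by
        intro x hx h0
        rw [hφ'x x hx h0]
        have := hmeme x hx; rw [mem_colourSet_iff] at this; exact this.2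
      refine ⟨σ', hsig', hsw', φ', ⟨⟨?_, ?_⟩, ?_, ?_⟩⟩
      · intro u
        rw [mem_colourSet_iff, hk1]
        by_cases hu : u = v
        · rw [hu, hφ'v]
          exact ⟨fun _ => hN0, by omega⟩
        · by_cases h0 : φe u = 0
          · constructor
            · intro _
              intro hcon
              have := habs' u hu h0
              rw [hcon] at this; simp at this
            · rw [habs' u hu h0]
          · rw [hφ'x u hu h0]
            have := hmeme u hu; rw [mem_colourSet_iff] at this
            exact ⟨fun _ => h0, by omega⟩
      · -- properness
        intro x y hadj
        by_cases hx : x = v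
        · rw [hx] at hadj ⊢
          have hy : y ≠ v := hadj.ne'
          rw [hφ'v]
          by_cases h0 : φe y = 0
          · rw [hφ'z y hy h0 hadj]
            rcases hpm' v y with h | h <;> rw [h] <;> intro hcon <;> omega
          · apply natAbs_ne
            rw [natAbs_unit_mul (hpm' v y), hNabs]
            have := habsle y hy h0
            rw [hφ'x y hy h0] at this ⊢
            omega
        · by_cases hy : y = v
          · rw [hy] at hadj ⊢
            rw [hφ'v]
            by_cases h0 : φe x = 0
            · have hadj' : G.Adj v x := hadj.symm
              rw [hφ'z x hx h0 hadj']
              rw [hsym' x v]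
              rcases hpm' v x with h | h <;> rw [h] <;> intro hcon <;> omega
            · apply natAbs_ne
              rw [natAbs_unit_mul (hpm' x v), hNabs]
              have := habsle x hx h0
              omega
          · by_cases h0x : φe x = 0
            · by_cases h0y : φe y = 0
              · exfalso
                have := hpropG x y hx hy hadj
                rw [h0x, h0y, mul_zero] at this
                exact this rfl
              · apply natAbs_ne
                rw [natAbs_unit_mul (hpm' x y)]
                have h1 := habs' x hx h0x
                have h2 := habsle y hy h0y
                rw [hφ'x y hy h0y] at h2 ⊢
                omega
            · by_cases h0y : φe y = 0
              · apply natAbs_ne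
                rw [natAbs_unit_mul (hpm' x y)]
                have h1 := habsle x hx h0x
                have h2 := habs' y hy h0y
                omega
              · rw [hφ'x x hx h0x, hφ'x y hy h0y]
                exact hpropG x y hx hy hadj
      · -- pairs
        intro i j hi hj hij
        rw [mem_colourSet_iff, hk1] at hi hj
        have hii := hi.1 (by omega)
        have hjj := hj.1 (by omega)
        have hi0 : i ≠ 0 := by simpa using hii
        have hj0 : j ≠ 0 := by simpa using hjj
        have hile : i ≤ n + 1 := by have := hi.2; simpa using this
        have hjle : j ≤ n + 1 := by have := hj.2; simpa using this
        have key : ∀ jj : ℕ, 1 ≤ jj → jj ≤ n → ∀ sg : ℤ, sg = 1 ∨ sg = -1 →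
            HasEdgeType G σ' φ' (n+1) jj sg := by
          intro jj hjj1 hjjn sg hsg
          have hstuck : ∀ c : ℤ, c ≠ 0 → c.natAbs = jj →
              ∃ u, G.Adj v u ∧ σ' v u * φ' u = c := by
            intro c hc0 hcabs
            have hck : c ∈ colourSet k := by
              rw [mem_colourSet_iff]; exact ⟨fun _ => hc0, by omega⟩
            obtain ⟨u, huadj, huc⟩ := hfree c hck
            have hu : u ≠ v := huadj.ne'
            have hu0 : φe u ≠ 0 := by
              intro hcon; rw [hcon, mul_zero] at huc; exact hc0 huc.symm
            exact ⟨u, huadj, by rw [hφ'x u hu hu0]; exact huc⟩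
          have := stuck_types hpm' hstuck hjj1 hsg
          rwa [hφ'v, hNabs] at this
        have transfer : ∀ ii jj : ℕ, 1 ≤ ii → ii ≤ n → 1 ≤ jj → jj ≤ n → ii ≠ jj →
            ∀ sg : ℤ, HasEdgeType (G.induce {u | u ≠ v}) σ'' φ ii jj sg →
            HasEdgeType G σ' φ' ii jj sg := by
          intro ii jj hii1 hiin hjj1 hjjn hne sg hty
          have h1 : HasEdgeType G σ' φe ii jj sg := hasEdgeType_lift hty hφe hrestr
          apply hasEdgeType_congr h1
          · intro u hu
            have hu0 : φe u ≠ 0 := by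
              intro hcon; rw [hcon] at hu; simp at hu; omega
            have huv : u ≠ v := by
              intro hcon; rw [hcon, hφev] at hu; simp at hu; omega
            exact hφ'x u huv hu0
          · intro u hu
            have hu0 : φe u ≠ 0 := by
              intro hcon; rw [hcon] at hu; simp at hu; omega
            have huv : u ≠ v := by
              intro hcon; rw [hcon, hφev] at hu; simp at hu; omega
            exact hφ'x u huv hu0
        by_cases hitop : i = n + 1
        · subst hitop
          have hjn : j ≤ n := by omega
          exact ⟨key j (by omega) hjn 1 (Or.inl rfl), key j (by omega) hjn (-1) (Or.inr rfl)⟩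
        · by_cases hjtop : j = n + 1
          · subst hjtop
            have hin : i ≤ n := by omega
            exact ⟨hasEdgeType_symm hsym' (key i (by omega) hin 1 (Or.inl rfl)),
              hasEdgeType_symm hsym' (key i (by omega) hin (-1) (Or.inr rfl))⟩
          · have hik : ((i : ℕ) : ℤ) ∈ colourSet k := by
              rw [mem_colourSet_iff]
              exact ⟨fun h => absurd h hke, by simpa using (by omega : i ≤ n)⟩
            have hjk : ((j : ℕ) : ℤ) ∈ colourSet k := by
              rw [mem_colourSet_iff]
              exact ⟨fun h => absurd h hke, by simpa using (by omega : j ≤ n)⟩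
            obtain ⟨h1, h2⟩ := hpairs i j hik hjk hij
            exact ⟨transfer i j (by omega) (by omega) (by omega) (by omega) hij 1 h1,
              transfer i j (by omega) (by omega) (by omega) (by omega) hij (-1) h2⟩
      · -- diagonal
        intro i hi1 hi
        rw [mem_colourSet_iff, hk1] at hi
        have hile : i ≤ n + 1 := by have := hi.2; simpa using this
        by_cases hitop : i = n + 1
        · subst hitop
          refine ⟨v, z, hzadj, by rw [hφ'v, hNabs], habs' z hzadj.ne' hz0', ?_⟩
          unfold redSign
          rw [hφ'v, hφ'z z hzadj.ne' hz0' hzadj]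
          have he : -σ' v z = 1 ∨ -σ' v z = -1 := by
            rcases hpm' v z with h | h <;> rw [h] <;> simp
          rw [isgn_unit_mul he hN0, hisgnN]
          rcases hpm' v z with h | h <;> rw [h] <;> ring
        · have hik : ((i : ℕ) : ℤ) ∈ colourSet k := by
            rw [mem_colourSet_iff]
            exact ⟨fun h => absurd h hke, by simpa using (by omega : i ≤ n)⟩
          have h1 : HasEdgeType G σ' φe i i (-1) :=
            hasEdgeType_lift (hdiag i hi1 hik) hφe hrestr
          apply hasEdgeType_congr h1 <;>
          · intro u hu
            have hu0 : φe u ≠ 0 := by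
              intro hcon; rw [hcon] at hu; simp at hu; omega
            have huv : u ≠ v := by
              intro hcon; rw [hcon, hφev] at hu; simp at hu; omega
            exact hφ'x u huv hu0
end Up
section ZPhase

/-- Final phase for the odd case of vertex deletion: recolour the `0`-class into
nonzero values, reaching a complete `2n`- or `(2n+1)`-colouring. -/
lemma zphase {V' : Type*} [Finite V'] (H : SimpleGraph V') (σr : V' → V' → ℤ)
    (hsym : ∀ u w, σr u w = σr w u) (hpm : ∀ u w, σr u w = 1 ∨ σr u w = -1)
    (n : ℕ) (hn : 1 ≤ n) (ψ₁ : V' → ℤ)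
    (hprop : ∀ u w, H.Adj u w → ψ₁ u ≠ σr u w * ψ₁ w)
    (hval : ∀ u, (ψ₁ u).natAbs ≤ n)
    (hstable : ∀ i j : ℕ, 1 ≤ i → i ≤ n - 1 → 1 ≤ j → j ≤ n - 1 → i ≠ j →
      ∀ sg : ℤ, sg = 1 ∨ sg = -1 → HasEdgeType H σr ψ₁ i j sg)
    (hdiag : ∀ i : ℕ, 1 ≤ i → i ≤ n - 1 → HasEdgeType H σr ψ₁ i i (-1))
    (htop : ∀ jj : ℕ, 1 ≤ jj → jj ≤ n - 1 → ∀ sg : ℤ, sg = 1 ∨ sg = -1 →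
      HasEdgeType H σr ψ₁ n jj sg)
    (hnn : HasEdgeType H σr ψ₁ n n (-1)) :
    ∃ k' : ℕ, 2 * n ≤ k' ∧ ∃ φf, IsCompleteColouring H σr k' φf := by
  classical
  set P2 : Set ℤ := {c : ℤ | c ≠ 0 ∧ c.natAbs ≤ n} with hP2
  set Z : Set V' := {x | ψ₁ x = 0} with hZ
  obtain ⟨φg, hg1, hg2, hg3, hg4⟩ := exists_max_recolour H σr hsym hpm P2 Z ψ₁
    (fun w hw => by rw [hw]; rintro ⟨h0, _⟩; exact h0 rfl) hprop
  -- vertices with nonzero colour are untouched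
  have huntouched : ∀ u, ψ₁ u ≠ 0 → φg u = ψ₁ u := fun u hu => hg1 u hu
  have hstableg : ∀ i j : ℕ, 1 ≤ i → i ≤ n - 1 → 1 ≤ j → j ≤ n - 1 → i ≠ j →
      ∀ sg : ℤ, sg = 1 ∨ sg = -1 → HasEdgeType H σr φg i j sg := by
    intro i j hi1 hin hj1 hjn hij sg hsg
    apply hasEdgeType_congr (hstable i j hi1 hin hj1 hjn hij sg hsg) <;>
    · intro u hu
      exact huntouched u (by intro h0; rw [h0] at hu; simp at hu; omega)
  have hdiagg : ∀ i : ℕ, 1 ≤ i → i ≤ n - 1 → HasEdgeType H σr φg i i (-1) := by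
    intro i hi1 hin
    apply hasEdgeType_congr (hdiag i hi1 hin) <;>
    · intro u hu
      exact huntouched u (by intro h0; rw [h0] at hu; simp at hu; omega)
  have hnng : HasEdgeType H σr φg n n (-1) := by
    apply hasEdgeType_congr hnn <;>
    · intro u hu
      exact huntouched u (by intro h0; rw [h0] at hu; simp at hu; omega)
  have hvalg : ∀ u, (φg u).natAbs ≤ n := by
    intro u
    by_cases hu : ψ₁ u = 0
    · rcases hg2 u hu with h | h
      · rw [h, hu]; simp
      · exact h.2
    · rw [huntouched u hu]; exact hval u
  have htopg : ∀ jj : ℕ, 1 ≤ jj → jj ≤ n - 1 → ∀ sg : ℤ, sg = 1 ∨ sg = -1 →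
      HasEdgeType H σr φg n jj sg := by
    intro jj hjj1 hjjn sg hsg
    apply hasEdgeType_congr (htop jj hjj1 hjjn sg hsg) <;>
    · intro u hu
      exact huntouched u (by intro h0; rw [h0] at hu; simp at hu; omega)
  by_cases hstuckz : ∃ z ∈ Z, φg z = ψ₁ z
  · -- some zero-vertex is stuck: complete (2n+1)-colouring
    obtain ⟨z, hzZ, hzg⟩ := hstuckz
    have hz0 : φg z = 0 := by rw [hzg]; exact hzZ
    have hzev : ∀ c ∈ P2, ∃ u, H.Adj z u ∧ σr z u * φg u = c := hg4 z hzZ hzg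
    have hzero : ∀ jj : ℕ, 1 ≤ jj → jj ≤ n → ∀ sg : ℤ, sg = 1 ∨ sg = -1 →
        HasEdgeType H σr φg 0 jj sg := by
      intro jj hjj1 hjjn sg hsg
      have hstuck : ∀ c : ℤ, c ≠ 0 → c.natAbs = jj → ∃ u, H.Adj z u ∧ σr z u * φg u = c :=
        fun c hc0 hca => hzev c ⟨hc0, by omega⟩
      have := stuck_types hpm hstuck hjj1 hsg
      rwa [hz0] at this
    refine ⟨2 * n + 1, by omega, φg, ⟨⟨?_, hg3⟩, ?_, ?_⟩⟩
    · intro u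
      rw [mem_colourSet_iff]
      refine ⟨fun he => by omega, ?_⟩
      have := hvalg u; omega
    · intro i j hi hj hij
      rw [mem_colourSet_iff] at hi hj
      have hin : i ≤ n := by have := hi.2; simp only [Int.natAbs_natCast] at this; omega
      have hjn : j ≤ n := by have := hj.2; simp only [Int.natAbs_natCast] at this; omega
      by_cases hi0 : i = 0
      · subst hi0
        exact ⟨hzero j (by omega) hjn 1 (Or.inl rfl), hzero j (by omega) hjn (-1) (Or.inr rfl)⟩
      · by_cases hj0 : j = 0
        · subst hj0
          exact ⟨hasEdgeType_symm hsym (hzero i (by omega) hin 1 (Or.inl rfl)),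
            hasEdgeType_symm hsym (hzero i (by omega) hin (-1) (Or.inr rfl))⟩
        · by_cases hitop : i = n
          · subst hitop
            exact ⟨htopg j (by omega) (by omega) 1 (Or.inl rfl),
              htopg j (by omega) (by omega) (-1) (Or.inr rfl)⟩
          · by_cases hjtop : j = n
            · subst hjtop
              exact ⟨hasEdgeType_symm hsym (htopg i (by omega) (by omega) 1 (Or.inl rfl)),
                hasEdgeType_symm hsym (htopg i (by omega) (by omega) (-1) (Or.inr rfl))⟩
            · exact ⟨hstableg i j (by omega) (by omega) (by omega) (by omega) hij 1 (Or.inl rfl),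
                hstableg i j (by omega) (by omega) (by omega) (by omega) hij (-1) (Or.inr rfl)⟩
    · intro i hi1 hi
      rw [mem_colourSet_iff] at hi
      have hin : i ≤ n := by have := hi.2; simp only [Int.natAbs_natCast] at this; omega
      by_cases hitop : i = n
      · subst hitop; exact hnng
      · exact hdiagg i hi1 (by omega)
  · -- all zero-vertices recoloured: complete 2n-colouring
    push_neg at hstuckz
    have hnozero : ∀ u, φg u ≠ 0 := by
      intro u
      by_cases hu : ψ₁ u = 0
      · rcases hg2 u hu with h | h
        · exact absurd h (hstuckz u hu)
        · exact h.1
      · rw [huntouched u hu]; exact hu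
    refine ⟨2 * n, by omega, φg, ⟨⟨?_, hg3⟩, ?_, ?_⟩⟩
    · intro u
      rw [mem_colourSet_iff]
      refine ⟨fun _ => hnozero u, ?_⟩
      have := hvalg u; omega
    · intro i j hi hj hij
      rw [mem_colourSet_iff] at hi hj
      have hi0 : i ≠ 0 := by
        intro h; subst h; have := hi.1 (by omega); simp at this
      have hj0 : j ≠ 0 := by
        intro h; subst h; have := hj.1 (by omega); simp at this
      have hin : i ≤ n := by have := hi.2; simp only [Int.natAbs_natCast] at this; omega
      have hjn : j ≤ n := by have := hj.2; simp only [Int.natAbs_natCast] at this; omega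
      by_cases hitop : i = n
      · subst hitop
        exact ⟨htopg j (by omega) (by omega) 1 (Or.inl rfl),
          htopg j (by omega) (by omega) (-1) (Or.inr rfl)⟩
      · by_cases hjtop : j = n
        · subst hjtop
          exact ⟨hasEdgeType_symm hsym (htopg i (by omega) (by omega) 1 (Or.inl rfl)),
            hasEdgeType_symm hsym (htopg i (by omega) (by omega) (-1) (Or.inr rfl))⟩
        · exact ⟨hstableg i j (by omega) (by omega) (by omega) (by omega) hij 1 (Or.inl rfl),
            hstableg i j (by omega) (by omega) (by omega) (by omega) hij (-1) (Or.inr rfl)⟩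
    · intro i hi1 hi
      rw [mem_colourSet_iff] at hi
      have hin : i ≤ n := by have := hi.2; simp only [Int.natAbs_natCast] at this; omega
      by_cases hitop : i = n
      · subst hitop; exact hnng
      · exact hdiagg i hi1 (by omega)

end ZPhase
section Down

lemma admits_down {V : Type*} [Fintype V] (G : SimpleGraph V) (σ : V → V → ℤ)
    (v : V) (k : ℕ) (hk : 3 ≤ k)
    (h : AdmitsComplete G σ k) :
    ∃ k', k - 2 ≤ k' ∧
      AdmitsComplete (G.induce {u | u ≠ v}) (fun a b => σ a.1 b.1) k' := by
  classical
  obtain ⟨σ', hsig', hsw', φG, ⟨⟨hmemG, hpropG⟩, hpairsG, hdiagG⟩⟩ := h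
  obtain ⟨s, hs, hσ'eq⟩ := hsw'
  have hsym' := hsig'.1
  have hpm' := hsig'.2
  set n := k / 2 with hndef
  have hn1 : 1 ≤ n := by omega
  set σr : {u // u ≠ v} → {u // u ≠ v} → ℤ := fun p q => σ' p.1 q.1 with hσrdef
  have hsymr : ∀ p q, σr p q = σr q p := fun p q => hsym' p.1 q.1
  have hpmr : ∀ p q, σr p q = 1 ∨ σr p q = -1 := fun p q => hpm' p.1 q.1
  have hswr : SwitchEquiv (fun a b : {u // u ≠ v} => σ a.1 b.1) σr := by
    refine ⟨fun p => s p.1, fun p => hs p.1, fun p q => ?_⟩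
    simp only [hσrdef]; exact hσ'eq p.1 q.1
  have pack : ∀ k' : ℕ, k - 2 ≤ k' →
      (∃ φf, IsCompleteColouring (G.induce {u | u ≠ v}) σr k' φf) →
      ∃ k', k - 2 ≤ k' ∧
        AdmitsComplete (G.induce {u | u ≠ v}) (fun a b => σ a.1 b.1) k' := by
    rintro k' hk' ⟨φf, hc⟩
    exact ⟨k', hk', σr, ⟨hsymr, hpmr⟩, hswr, φf, hc⟩
  set a := (φG v).natAbs with hadef
  have haa : a ≤ n := by
    have := hmemG v; rw [mem_colourSet_iff] at this; exact this.2
  by_cases ha0 : a = 0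
  · -- Case A : the deleted vertex has value 0; k must be odd
    have hφGv : φG v = 0 := by rw [← Int.natAbs_eq_zero, ← hadef]; exact ha0
    have hko : k % 2 = 1 := by
      rcases Nat.even_or_odd k with he | ho
      · exfalso
        have := hmemG v; rw [mem_colourSet_iff] at this
        rw [Nat.even_iff] at he
        exact this.1 he hφGv
      · rw [Nat.odd_iff] at ho; exact ho
    have hk2 : k = 2 * n + 1 := by omega
    set ψ₀ : {u // u ≠ v} → ℤ := fun p => φG p.1 with hψ₀def
    have hprop₀ : ∀ p q, (G.induce {u | u ≠ v}).Adj p q → ψ₀ p ≠ σr p q * ψ₀ q :=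
      fun p q hadj => hpropG p.1 q.1 hadj
    have hval₀ : ∀ p, (ψ₀ p).natAbs ≤ n := by
      intro p
      have := hmemG p.1; rw [mem_colourSet_iff] at this; exact this.2
    have hrest : ∀ i j : ℕ, i ≤ n → j ≤ n → i ≠ j → i ≠ 0 → j ≠ 0 →
        ∀ sg : ℤ, sg = 1 ∨ sg = -1 →
        HasEdgeType (G.induce {u | u ≠ v}) σr ψ₀ i j sg := by
      intro i j hi hj hij hi0 hj0 sg hsg
      have hi' := mem_colourSet_ofNat (k := k) (fun _ => hi0) (by omega)
      have hj' := mem_colourSet_ofNat (k := k) (fun _ => hj0) (by omega)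
      have hvi : (φG v).natAbs ≠ i := by rw [← hadef, ha0]; omega
      have hvj : (φG v).natAbs ≠ j := by rw [← hadef, ha0]; omega
      rcases hsg with h | h <;> subst h
      · exact hasEdgeType_restrict (hpairsG i j hi' hj' hij).1 hvi hvj
      · exact hasEdgeType_restrict (hpairsG i j hi' hj' hij).2 hvi hvj
    have hrestd : ∀ i : ℕ, 1 ≤ i → i ≤ n →
        HasEdgeType (G.induce {u | u ≠ v}) σr ψ₀ i i (-1) := by
      intro i hi1 hi
      have hi' := mem_colourSet_ofNat (k := k) (i := i) (fun _ => by omega) (by omega)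
      have hvi : (φG v).natAbs ≠ i := by rw [← hadef, ha0]; omega
      exact hasEdgeType_restrict (hdiagG i hi1 hi') hvi hvi
    obtain ⟨k', hk', φff, hcc⟩ := zphase (G.induce {u | u ≠ v}) σr hsymr hpmr n hn1 ψ₀
      hprop₀ hval₀
      (fun i j hi1 hin hj1 hjn hij sg hsg => hrest i j (by omega) (by omega) hij
        (by omega) (by omega) sg hsg)
      (fun i hi1 hin => hrestd i hi1 (by omega))
      (fun jj hjj1 hjjn sg hsg => hrest n jj (le_refl n) (by omega) (by omega)
        (by omega) (by omega) sg hsg)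
      (hrestd n hn1 (le_refl n))
    exact pack k' (by omega) ⟨φff, hcc⟩
  · -- Case B : the deleted vertex has a nonzero value; relabel it to the top value n
    have ha1 : 1 ≤ a := by omega
    -- the relabelling swapping values a and n
    set π : ℕ → ℕ := fun i => if i = a then n else if i = n then a else i with hπdef
    have hπa : π a = n := by simp [hπdef]
    have hππ : ∀ i, π (π i) = i := by
      intro i; simp only [hπdef]; split_ifs <;> omega
    have hπle : ∀ i, i ≤ n → π i ≤ n := by
      intro i hi; simp only [hπdef]; split_ifs <;> omega
    have hπ0 : ∀ i, π i = 0 ↔ i = 0 := by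
      intro i; simp only [hπdef]; split_ifs <;> omega
    set ρ : ℤ → ℤ := fun x => isgn x * (π x.natAbs : ℤ) with hρdef
    have hρabs : ∀ x, (ρ x).natAbs = π x.natAbs := by
      intro x; simp only [hρdef]
      rw [natAbs_unit_mul (isgn_cases x)]; simp
    have hρzero : ρ 0 = 0 := by
      simp only [hρdef]
      have : π 0 = 0 := (hπ0 0).mpr rfl
      simp [this, isgn]
    have hρ0 : ∀ x, ρ x = 0 ↔ x = 0 := by
      intro x
      constructor
      · intro h0
        have := hρabs x
        rw [h0] at this
        simp only [Int.natAbs_zero] at this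
        have := (hπ0 _).mp this.symm
        omega
      · intro h0; rw [h0]; exact hρzero
    have hρsgn : ∀ x, isgn (ρ x) = isgn x := by
      intro x
      by_cases hx : x = 0
      · rw [hx, hρzero]
      · have hne : ((π x.natAbs : ℕ) : ℤ) ≠ 0 := by
          simp only [ne_eq, Nat.cast_eq_zero]
          rw [hπ0]
          simpa using hx
        simp only [hρdef]
        rw [isgn_unit_mul (isgn_cases x) hne, isgn_natCast, mul_one]
    have hρinv : ∀ x, ρ (ρ x) = x := by
      intro x
      have h1 : ρ (ρ x) = isgn (ρ x) * (π (ρ x).natAbs : ℤ) := rfl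
      rw [h1, hρsgn, hρabs, hππ, isgn_mul_natAbs]
    have hρinj : ∀ x y, ρ x = ρ y → x = y := by
      intro x y hxy
      have := congrArg ρ hxy
      rwa [hρinv, hρinv] at this
    have hρunit : ∀ e : ℤ, e = 1 ∨ e = -1 → ∀ x, ρ (e * x) = e * ρ x := by
      intro e he x
      by_cases hx : x = 0
      · rw [hx, mul_zero, hρzero, mul_zero]
      · simp only [hρdef]
        rw [natAbs_unit_mul he, isgn_unit_mul he hx]; ring
    set ψ : V → ℤ := fun u => ρ (φG u) with hψdef
    have hψv : (ψ v).natAbs = n := by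
      simp only [hψdef]; rw [hρabs, ← hadef, hπa]
    have hmemψ : ∀ u, (ψ u).natAbs ≤ n ∧ (φG u ≠ 0 → ψ u ≠ 0) := by
      intro u
      constructor
      · simp only [hψdef]
        rw [hρabs]
        apply hπle
        have := hmemG u; rw [mem_colourSet_iff] at this; exact this.2
      · intro h0 hc
        exact h0 ((hρ0 _).mp hc)
    have hpropψ : ∀ u w, G.Adj u w → ψ u ≠ σ' u w * ψ w := by
      intro u w hadj heq
      apply hpropG u w hadj
      apply hρinj
      rw [hρunit (σ' u w) (hpm' u w)]
      exact heq
    have htrans : ∀ i j : ℕ, ∀ sg : ℤ, HasEdgeType G σ' φG i j sg →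
        HasEdgeType G σ' ψ (π i) (π j) sg := by
      rintro i j sg ⟨u, w, hadj, hu, hw, hsg⟩
      refine ⟨u, w, hadj, ?_, ?_, ?_⟩
      · simp only [hψdef]; rw [hρabs, hu]
      · simp only [hψdef]; rw [hρabs, hw]
      · unfold redSign at hsg ⊢
        simp only [hψdef]
        rw [hρsgn, hρsgn]; exact hsg
    have hpairsψ : ∀ i j : ℕ, i ≤ n → j ≤ n → (k % 2 = 0 → i ≠ 0) → (k % 2 = 0 → j ≠ 0) →
        i ≠ j → ∀ sg : ℤ, sg = 1 ∨ sg = -1 → HasEdgeType G σ' ψ i j sg := by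
      intro i j hi hj hi0 hj0 hij sg hsg
      have hi' := mem_colourSet_ofNat (k := k) (i := π i)
        (fun he => by rw [ne_eq, hπ0]; exact hi0 he) (by rw [← hndef]; exact hπle i hi)
      have hj' := mem_colourSet_ofNat (k := k) (i := π j)
        (fun he => by rw [ne_eq, hπ0]; exact hj0 he) (by rw [← hndef]; exact hπle j hj)
      have hne : π i ≠ π j := by
        intro hc
        apply hij
        have := congrArg π hc
        rwa [hππ, hππ] at this
      have h2 : ∀ sg' : ℤ, sg' = 1 ∨ sg' = -1 → HasEdgeType G σ' ψ (π (π i)) (π (π j)) sg' := by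
        intro sg' hsg'
        rcases hsg' with h | h <;> subst h
        · exact htrans _ _ _ (hpairsG (π i) (π j) hi' hj' hne).1
        · exact htrans _ _ _ (hpairsG (π i) (π j) hi' hj' hne).2
      have := h2 sg hsg
      rwa [hππ, hππ] at this
    have hdiagψ : ∀ i : ℕ, 1 ≤ i → i ≤ n → HasEdgeType G σ' ψ i i (-1) := by
      intro i hi1 hi
      have hπi1 : 1 ≤ π i := by
        have := hπ0 i; omega
      have hi' := mem_colourSet_ofNat (k := k) (i := π i)
        (fun _ => by omega) (by rw [← hndef]; exact hπle i hi)
      have := htrans _ _ _ (hdiagG (π i) hπi1 hi')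
      rwa [hππ] at this
    -- restrict to the subgraph
    set H := G.induce {u | u ≠ v} with hHdef
    set ψ₀ : {u // u ≠ v} → ℤ := fun p => ψ p.1 with hψ₀def
    have hprop₀ : ∀ p q, H.Adj p q → ψ₀ p ≠ σr p q * ψ₀ q :=
      fun p q hadj => hpropψ p.1 q.1 hadj
    have hval₀ : ∀ p, (ψ₀ p).natAbs ≤ n := fun p => (hmemψ p.1).1
    have hnz₀ : k % 2 = 0 → ∀ p : {u // u ≠ v}, ψ₀ p ≠ 0 := by
      intro hke p
      apply (hmemψ p.1).2
      have := hmemG p.1; rw [mem_colourSet_iff] at this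
      exact this.1 hke
    have Stp : ∀ i j : ℕ, i ≤ n → j ≤ n → (k % 2 = 0 → i ≠ 0) → (k % 2 = 0 → j ≠ 0) →
        i ≠ j → i ≠ n → j ≠ n → ∀ sg : ℤ, sg = 1 ∨ sg = -1 →
        HasEdgeType H σr ψ₀ i j sg := by
      intro i j hi hj hi0 hj0 hij hin hjn sg hsg
      exact hasEdgeType_restrict (hpairsψ i j hi hj hi0 hj0 hij sg hsg)
        (by rw [hψv]; omega) (by rw [hψv]; omega)
    have Std : ∀ i : ℕ, 1 ≤ i → i ≤ n → i ≠ n →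
        HasEdgeType H σr ψ₀ i i (-1) := by
      intro i hi1 hi hin
      exact hasEdgeType_restrict (hdiagψ i hi1 hi) (by rw [hψv]; omega) (by rw [hψv]; omega)
    -- recolour the top class (minus v) greedily with low colours
    set P1 : Set ℤ := {c : ℤ | c ≠ 0 ∧ c.natAbs ≤ n - 1} with hP1def
    set Wset : Set {u // u ≠ v} := {p | (ψ₀ p).natAbs = n} with hWdef
    obtain ⟨φf, hf1, hf2, hf3, hf4⟩ := exists_max_recolour H σr hsymr hpmr P1 Wset ψ₀
      (by
        intro w hw
        rw [hWdef] at hw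
        rintro ⟨h0, hle⟩
        rw [hw] at hle
        omega)
      hprop₀
    have hfstable : ∀ u, (ψ₀ u).natAbs ≠ n → φf u = ψ₀ u := by
      intro u hu
      exact hf1 u (by rw [hWdef]; exact hu)
    have hfval : ∀ u, (φf u).natAbs ≤ n := by
      intro u
      by_cases hu : u ∈ Wset
      · rcases hf2 u hu with h | h
        · rw [h]; exact hval₀ u
        · obtain ⟨h1, h2⟩ := h; omega
      · rw [hf1 u hu]; exact hval₀ u
    have hlowf : ∀ x, ¬(x ∈ Wset ∧ φf x = ψ₀ x) → (φf x).natAbs ≤ n - 1 := by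
      intro x hx
      by_cases hxW : x ∈ Wset
      · rcases hf2 x hxW with h | h
        · exact absurd ⟨hxW, h⟩ hx
        · exact h.2
      · rw [hf1 x hxW]
        have h1 := hval₀ x
        have h2 : (ψ₀ x).natAbs ≠ n := fun hc => hxW (by rw [hWdef]; exact hc)
        omega
    have hnzf : k % 2 = 0 → ∀ x, φf x ≠ 0 := by
      intro hke x
      by_cases hxW : x ∈ Wset
      · rcases hf2 x hxW with h | h
        · rw [h]; exact hnz₀ hke x
        · exact h.1
      · rw [hf1 x hxW]; exact hnz₀ hke x
    -- stable edge types w.r.t. φf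
    have Stpf : ∀ i j : ℕ, i ≤ n - 1 → j ≤ n - 1 → (k % 2 = 0 → i ≠ 0) → (k % 2 = 0 → j ≠ 0) →
        i ≠ j → ∀ sg : ℤ, sg = 1 ∨ sg = -1 → HasEdgeType H σr φf i j sg := by
      intro i j hi hj hi0 hj0 hij sg hsg
      apply hasEdgeType_congr (Stp i j (by omega) (by omega) hi0 hj0 hij
        (by omega) (by omega) sg hsg) <;>
      · intro u hu
        exact hfstable u (by omega)
    have Stdf : ∀ i : ℕ, 1 ≤ i → i ≤ n - 1 → HasEdgeType H σr φf i i (-1) := by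
      intro i hi1 hi
      apply hasEdgeType_congr (Std i hi1 (by omega) (by omega)) <;>
      · intro u hu
        exact hfstable u (by omega)
    by_cases hT : ∃ t, t ∈ Wset ∧ φf t = ψ₀ t
    · -- some top vertex could not be recoloured
      obtain ⟨t₀, ht₀W, ht₀f⟩ := hT
      have ht₀abs : (φf t₀).natAbs = n := by rw [ht₀f]; exact ht₀W
      have hev₀ : ∀ c ∈ P1, ∃ u, H.Adj t₀ u ∧ σr t₀ u * φf u = c := hf4 t₀ ht₀W ht₀f
      have htopf : ∀ jj : ℕ, 1 ≤ jj → jj ≤ n - 1 → ∀ sg : ℤ, sg = 1 ∨ sg = -1 →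
          HasEdgeType H σr φf n jj sg := by
        intro jj hjj1 hjjn sg hsg
        have hstuck : ∀ c : ℤ, c ≠ 0 → c.natAbs = jj →
            ∃ u, H.Adj t₀ u ∧ σr t₀ u * φf u = c := by
          intro c hc0 hca
          exact hev₀ c ⟨hc0, by omega⟩
        have := stuck_types hpmr hstuck hjj1 hsg
        rwa [ht₀abs] at this
      by_cases hke : k % 2 = 0
      · -- k even
        have hk2 : k = 2 * n := by omega
        by_cases hTedge : ∃ t1 t2, (t1 ∈ Wset ∧ φf t1 = ψ₀ t1) ∧
            (t2 ∈ Wset ∧ φf t2 = ψ₀ t2) ∧ H.Adj t1 t2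
        · -- an edge inside the stuck class : complete k-colouring of the subgraph
          obtain ⟨t1, t2, ht1, ht2, hadj12⟩ := hTedge
          apply pack k (by omega)
          refine ⟨φf, ⟨⟨?_, hf3⟩, ?_, ?_⟩⟩
          · intro u
            rw [mem_colourSet_iff]
            exact ⟨fun _ => hnzf hke u, by have := hfval u; omega⟩
          · intro i j hi hj hij
            obtain ⟨hi0, hile⟩ := mem_colourSet_ofNat' hi
            obtain ⟨hj0, hjle⟩ := mem_colourSet_ofNat' hj
            have hi0' : i ≠ 0 := hi0 hke
            have hj0' : j ≠ 0 := hj0 hke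
            by_cases hin : i = n
            · subst hin
              exact ⟨htopf j (by omega) (by omega) 1 (Or.inl rfl),
                htopf j (by omega) (by omega) (-1) (Or.inr rfl)⟩
            · by_cases hjn : j = n
              · subst hjn
                exact ⟨hasEdgeType_symm hsymr (htopf i (by omega) (by omega) 1 (Or.inl rfl)),
                  hasEdgeType_symm hsymr (htopf i (by omega) (by omega) (-1) (Or.inr rfl))⟩
              · exact ⟨Stpf i j (by omega) (by omega) (fun _ => hi0') (fun _ => hj0')
                    hij 1 (Or.inl rfl),
                  Stpf i j (by omega) (by omega) (fun _ => hi0') (fun _ => hj0')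
                    hij (-1) (Or.inr rfl)⟩
          · intro i hi1 hi
            obtain ⟨hi0, hile⟩ := mem_colourSet_ofNat' hi
            by_cases hin : i = n
            · subst hin
              exact inner_edge_type hsymr hpmr hf3 hadj12
                (by rw [ht1.2]; exact ht1.1) (by rw [ht2.2]; exact ht2.1) hn1
            · exact Stdf i hi1 (by omega)
        · -- stuck class independent : recolour it to 0, complete (k-1)-colouring
          set T : Set {u // u ≠ v} := {x | x ∈ Wset ∧ φf x = ψ₀ x} with hTdef
          set φ2 : {u // u ≠ v} → ℤ := fun x => if x ∈ T then 0 else φf x with hφ2def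
          have hφ2T : ∀ x, x ∈ T → φ2 x = 0 := by
            intro x hx; simp only [hφ2def, if_pos hx]
          have hφ2o : ∀ x, x ∉ T → φ2 x = φf x := by
            intro x hx; simp only [hφ2def, if_neg hx]
          have ht₀T : t₀ ∈ T := ⟨ht₀W, ht₀f⟩
          have habs2 : ∀ x, (φf x).natAbs ≤ n - 1 → φ2 x = φf x := by
            intro x hx
            apply hφ2o
            intro hxT
            have : (φf x).natAbs = n := by rw [hxT.2]; exact hxT.1
            omega
          have hprop2 : ∀ p q, H.Adj p q → φ2 p ≠ σr p q * φ2 q := by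
            intro p q hadj
            by_cases hp : p ∈ T
            · by_cases hq : q ∈ T
              · exact absurd ⟨p, q, hp, hq, hadj⟩ hTedge
              · rw [hφ2T p hp, hφ2o q hq]
                intro hcon
                have h1 : φf q ≠ 0 := hnzf hke q
                have h2 : σr p q * φf q ≠ 0 := by
                  rcases hpmr p q with h | h <;> rw [h] <;> simpa using h1
                exact h2 hcon.symm
            · by_cases hq : q ∈ T
              · rw [hφ2o p hp, hφ2T q hq, mul_zero]
                exact hnzf hke p
              · rw [hφ2o p hp, hφ2o q hq]
                exact hf3 p q hadj
          have trans2 : ∀ ii jj : ℕ, ii ≤ n - 1 → jj ≤ n - 1 → ∀ sg : ℤ,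
              HasEdgeType H σr φf ii jj sg → HasEdgeType H σr φ2 ii jj sg := by
            intro ii jj hii hjj sg hty
            apply hasEdgeType_congr hty
            · intro u hu; exact habs2 u (by omega)
            · intro u hu; exact habs2 u (by omega)
          have key : ∀ jj : ℕ, 1 ≤ jj → jj ≤ n - 1 → ∀ sg : ℤ, sg = 1 ∨ sg = -1 →
              HasEdgeType H σr φ2 0 jj sg := by
            intro jj hjj1 hjjn sg hsg
            have hstuck : ∀ c : ℤ, c ≠ 0 → c.natAbs = jj →
                ∃ u, H.Adj t₀ u ∧ σr t₀ u * φ2 u = c := by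
              intro c hc0 hca
              obtain ⟨u, hadj, hcu⟩ := hev₀ c ⟨hc0, by omega⟩
              have habsu : (φf u).natAbs = c.natAbs := by
                rw [← hcu, natAbs_unit_mul (hpmr t₀ u)]
              exact ⟨u, hadj, by rw [habs2 u (by omega)]; exact hcu⟩
            have := stuck_types hpmr hstuck hjj1 hsg
            rwa [hφ2T t₀ ht₀T] at this
          apply pack (k - 1) (by omega)
          refine ⟨φ2, ⟨⟨?_, hprop2⟩, ?_, ?_⟩⟩
          · intro u
            rw [mem_colourSet_iff]
            constructor
            · intro he; exact absurd he (by omega)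
            · by_cases hu : u ∈ T
              · rw [hφ2T u hu]; simp
              · rw [hφ2o u hu]
                have := hlowf u hu
                omega
          · intro i j hi hj hij
            obtain ⟨hi0, hile⟩ := mem_colourSet_ofNat' hi
            obtain ⟨hj0, hjle⟩ := mem_colourSet_ofNat' hj
            have hile' : i ≤ n - 1 := by omega
            have hjle' : j ≤ n - 1 := by omega
            by_cases hi0' : i = 0
            · subst hi0'
              exact ⟨key j (by omega) (by omega) 1 (Or.inl rfl),
                key j (by omega) (by omega) (-1) (Or.inr rfl)⟩
            · by_cases hj0' : j = 0
              · subst hj0'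
                exact ⟨hasEdgeType_symm hsymr (key i (by omega) (by omega) 1 (Or.inl rfl)),
                  hasEdgeType_symm hsymr (key i (by omega) (by omega) (-1) (Or.inr rfl))⟩
              · refine ⟨trans2 i j hile' hjle' 1 ?_, trans2 i j hile' hjle' (-1) ?_⟩
                · exact Stpf i j hile' hjle' (fun _ => hi0') (fun _ => hj0') hij 1 (Or.inl rfl)
                · exact Stpf i j hile' hjle' (fun _ => hi0') (fun _ => hj0') hij (-1) (Or.inr rfl)
          · intro i hi1 hi
            obtain ⟨hi0, hile⟩ := mem_colourSet_ofNat' hi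
            exact trans2 i i (by omega) (by omega) (-1) (Stdf i hi1 (by omega))
      · -- k odd
        have hk2 : k = 2 * n + 1 := by omega
        by_cases hTedge : ∃ t1 t2, (t1 ∈ Wset ∧ φf t1 = ψ₀ t1) ∧
            (t2 ∈ Wset ∧ φf t2 = ψ₀ t2) ∧ H.Adj t1 t2
        · -- inner edge in the stuck class : go to the zero-recolouring phase
          obtain ⟨t1, t2, ht1, ht2, hadj12⟩ := hTedge
          obtain ⟨k', hk', φff, hcc⟩ := zphase H σr hsymr hpmr n hn1 φf hf3 hfval
            (fun i j hi1 hin hj1 hjn hij sg hsg => Stpf i j hin hjn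
              (fun _ => by omega) (fun _ => by omega) hij sg hsg)
            (fun i hi1 hin => Stdf i hi1 hin)
            htopf
            (inner_edge_type hsymr hpmr hf3 hadj12
              (by rw [ht1.2]; exact ht1.1) (by rw [ht2.2]; exact ht2.1) hn1)
          exact pack k' (by omega) ⟨φff, hcc⟩
        · by_cases h0nb : ∃ t z, (t ∈ Wset ∧ φf t = ψ₀ t) ∧ H.Adj t z ∧ φf z = 0
          · -- a stuck vertex with a 0-neighbour : the u₀-trick, then the zero phase
            obtain ⟨tstar, u₀, htsT, hadjs, hu₀0⟩ := h0nb
            set T : Set {u // u ≠ v} := {x | x ∈ Wset ∧ φf x = ψ₀ x} with hTdef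
            have hTabs : ∀ x, x ∈ T → (φf x).natAbs = n := by
              intro x hx; rw [hx.2]; exact hx.1
            have htsTm : tstar ∈ T := htsT
            have hu₀T : u₀ ∉ T := by
              intro hc
              have := hTabs u₀ hc
              rw [hu₀0] at this; simp at this; omega
            set Nz : ℤ := ((n : ℕ) : ℤ) with hNzdef
            have hNz0 : Nz ≠ 0 := by
              rw [hNzdef]; simp only [ne_eq, Nat.cast_eq_zero]; omega
            have hNzabs : Nz.natAbs = n := by rw [hNzdef]; simp
            have hisgnNz : isgn Nz = 1 := isgn_natCast n
            have hneg : ∀ x y : {u // u ≠ v}, -σr x y = 1 ∨ -σr x y = -1 := by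
              intro x y; rcases hpmr x y with h | h <;> rw [h] <;> simp
            set ψ₁ : {u // u ≠ v} → ℤ := fun x => if x = u₀ then Nz
              else if x ∈ T ∧ H.Adj u₀ x then -σr u₀ x * Nz else φf x with hψ₁def
            have hψ₁u₀ : ψ₁ u₀ = Nz := by simp only [hψ₁def, if_pos rfl]
            have hψ₁T : ∀ x, x ∈ T → H.Adj u₀ x → ψ₁ x = -σr u₀ x * Nz := by
              intro x hx hadjx
              have hxne : x ≠ u₀ := fun hc => hu₀T (hc ▸ hx)
              simp only [hψ₁def, if_neg hxne, if_pos (And.intro hx hadjx)]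
            have hψ₁o : ∀ x, x ≠ u₀ → ¬(x ∈ T ∧ H.Adj u₀ x) → ψ₁ x = φf x := by
              intro x hx1 hx2; simp only [hψ₁def, if_neg hx1, if_neg hx2]
            have habsTmod : ∀ x, x ∈ T → (ψ₁ x).natAbs = n := by
              intro x hx
              by_cases hadjx : H.Adj u₀ x
              · rw [hψ₁T x hx hadjx, natAbs_unit_mul (hneg u₀ x), hNzabs]
              · rw [hψ₁o x (fun hc => hu₀T (hc ▸ hx)) (fun hc => hadjx hc.2)]
                exact hTabs x hx
            have hstab₁ : ∀ x, 1 ≤ (φf x).natAbs → (φf x).natAbs ≤ n - 1 → ψ₁ x = φf x := by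
              intro x h1 h2
              have hxu : x ≠ u₀ := by
                intro hc; rw [hc, hu₀0] at h1; simp at h1
              apply hψ₁o x hxu
              rintro ⟨hxT, _⟩
              have := hTabs x hxT; omega
            have hval₁ : ∀ x, (ψ₁ x).natAbs ≤ n := by
              intro x
              by_cases hx : x = u₀
              · rw [hx, hψ₁u₀, hNzabs]
              · by_cases hxT : x ∈ T ∧ H.Adj u₀ x
                · rw [hψ₁T x hxT.1 hxT.2, natAbs_unit_mul (hneg u₀ x), hNzabs]
                · rw [hψ₁o x hx hxT]; exact hfval x
            have hprop₁ : ∀ p q, H.Adj p q → ψ₁ p ≠ σr p q * ψ₁ q := by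
              intro p q hadj
              by_cases hp : p = u₀
              · rw [hp] at hadj ⊢
                rw [hψ₁u₀]
                by_cases hq : q ∈ T
                · rw [hψ₁T q hq hadj]
                  have hsq : σr u₀ q * σr u₀ q = 1 := by
                    rcases hpmr u₀ q with h | h <;> rw [h] <;> norm_num
                  intro hcon
                  rw [show σr u₀ q * (-σr u₀ q * Nz) = -(σr u₀ q * σr u₀ q) * Nz by ring,
                    hsq] at hcon
                  simp only [neg_mul, one_mul] at hcon
                  rw [hNzdef] at hcon
                  omega
                · have hqu : q ≠ u₀ := hadj.ne'
                  rw [hψ₁o q hqu (fun hc => hq hc.1)]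
                  apply natAbs_ne
                  rw [natAbs_unit_mul (hpmr u₀ q), hNzabs]
                  have := hlowf q (fun hc => hq hc)
                  omega
              · by_cases hq : q = u₀
                · rw [hq] at hadj ⊢
                  rw [hψ₁u₀]
                  by_cases hpT : p ∈ T
                  · rw [hψ₁T p hpT hadj.symm, hsymr p u₀]
                    rcases hpmr u₀ p with h | h <;> rw [h] <;>
                      simp only [neg_mul, one_mul, neg_neg] <;>
                      (rw [hNzdef]; intro hcon; omega)
                  · rw [hψ₁o p hp (fun hc => hpT hc.1)]
                    apply natAbs_ne
                    rw [natAbs_unit_mul (hpmr p u₀), hNzabs]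
                    have := hlowf p (fun hc => hpT hc)
                    omega
                · by_cases hpT : p ∈ T
                  · by_cases hqT : q ∈ T
                    · exact absurd ⟨p, q, hpT, hqT, hadj⟩ hTedge
                    · rw [hψ₁o q hq (fun hc => hqT hc.1)]
                      by_cases hpadj : H.Adj u₀ p
                      · rw [hψ₁T p hpT hpadj]
                        apply natAbs_ne
                        rw [natAbs_unit_mul (hneg u₀ p), hNzabs,
                          natAbs_unit_mul (hpmr p q)]
                        have := hlowf q (fun hc => hqT hc)
                        omega
                      · rw [hψ₁o p hp (fun hc => hpadj hc.2)]
                        exact hf3 p q hadj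
                  · by_cases hqT : q ∈ T
                    · rw [hψ₁o p hp (fun hc => hpT hc.1)]
                      by_cases hqadj : H.Adj u₀ q
                      · rw [hψ₁T q hqT hqadj]
                        apply natAbs_ne
                        rw [natAbs_unit_mul (hpmr p q), natAbs_unit_mul (hneg u₀ q), hNzabs]
                        have := hlowf p (fun hc => hpT hc)
                        omega
                      · rw [hψ₁o q hq (fun hc => hqadj hc.2)]
                        exact hf3 p q hadj
                    · rw [hψ₁o p hp (fun hc => hpT hc.1), hψ₁o q hq (fun hc => hqT hc.1)]
                      exact hf3 p q hadj
            have htop₁ : ∀ jj : ℕ, 1 ≤ jj → jj ≤ n - 1 → ∀ sg : ℤ, sg = 1 ∨ sg = -1 →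
                HasEdgeType H σr ψ₁ n jj sg := by
              intro jj hjj1 hjjn sg hsg
              have hstuck : ∀ c : ℤ, c ≠ 0 → c.natAbs = jj →
                  ∃ u, H.Adj t₀ u ∧ σr t₀ u * ψ₁ u = c := by
                intro c hc0 hca
                obtain ⟨u, hadj, hcu⟩ := hev₀ c ⟨hc0, by omega⟩
                have habsu : (φf u).natAbs = c.natAbs := by
                  rw [← hcu, natAbs_unit_mul (hpmr t₀ u)]
                exact ⟨u, hadj, by rw [hstab₁ u (by omega) (by omega)]; exact hcu⟩
              have := stuck_types hpmr hstuck hjj1 hsg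
              rwa [habsTmod t₀ ⟨ht₀W, ht₀f⟩] at this
            have hnn₁ : HasEdgeType H σr ψ₁ n n (-1) := by
              refine ⟨u₀, tstar, hadjs.symm, by rw [hψ₁u₀]; exact hNzabs,
                habsTmod tstar htsTm, ?_⟩
              unfold redSign
              rw [hψ₁u₀, hψ₁T tstar htsTm hadjs.symm, hisgnNz,
                isgn_unit_mul (hneg u₀ tstar) hNz0, hisgnNz]
              rcases hpmr u₀ tstar with h | h <;> rw [h] <;> norm_num
            obtain ⟨k', hk', φff, hcc⟩ := zphase H σr hsymr hpmr n hn1 ψ₁ hprop₁ hval₁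
              (fun i j hi1 hin hj1 hjn hij sg hsg => by
                apply hasEdgeType_congr (Stpf i j hin hjn
                  (fun _ => by omega) (fun _ => by omega) hij sg hsg)
                · intro u hu; exact hstab₁ u (by omega) (by omega)
                · intro u hu; exact hstab₁ u (by omega) (by omega))
              (fun i hi1 hin => by
                apply hasEdgeType_congr (Stdf i hi1 hin) <;>
                · intro u hu; exact hstab₁ u (by omega) (by omega))
              htop₁ hnn₁
            exact pack k' (by omega) ⟨φff, hcc⟩
          · -- no stuck vertex has a 0-neighbour : recolour the stuck class to 0
            set T : Set {u // u ≠ v} := {x | x ∈ Wset ∧ φf x = ψ₀ x} with hTdef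
            set φ2 : {u // u ≠ v} → ℤ := fun x => if x ∈ T then 0 else φf x with hφ2def
            have hφ2T : ∀ x, x ∈ T → φ2 x = 0 := by
              intro x hx; simp only [hφ2def, if_pos hx]
            have hφ2o : ∀ x, x ∉ T → φ2 x = φf x := by
              intro x hx; simp only [hφ2def, if_neg hx]
            have habs2 : ∀ x, (φf x).natAbs ≤ n - 1 → φ2 x = φf x := by
              intro x hx
              apply hφ2o
              intro hxT
              have : (φf x).natAbs = n := by rw [hxT.2]; exact hxT.1
              omega
            have hprop2 : ∀ p q, H.Adj p q → φ2 p ≠ σr p q * φ2 q := by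
              intro p q hadj
              by_cases hp : p ∈ T
              · by_cases hq : q ∈ T
                · exact absurd ⟨p, q, hp, hq, hadj⟩ hTedge
                · rw [hφ2T p hp, hφ2o q hq]
                  intro hcon
                  have h1 : φf q ≠ 0 := by
                    intro h0
                    exact h0nb ⟨p, q, hp, hadj, h0⟩
                  have h2 : σr p q * φf q ≠ 0 := by
                    rcases hpmr p q with h | h <;> rw [h] <;> simpa using h1
                  exact h2 hcon.symm
              · by_cases hq : q ∈ T
                · rw [hφ2o p hp, hφ2T q hq, mul_zero]
                  intro h0
                  exact h0nb ⟨q, p, hq, hadj.symm, h0⟩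
                · rw [hφ2o p hp, hφ2o q hq]
                  exact hf3 p q hadj
            have trans2 : ∀ ii jj : ℕ, ii ≤ n - 1 → jj ≤ n - 1 → ∀ sg : ℤ,
                HasEdgeType H σr φf ii jj sg → HasEdgeType H σr φ2 ii jj sg := by
              intro ii jj hii hjj sg hty
              apply hasEdgeType_congr hty
              · intro u hu; exact habs2 u (by omega)
              · intro u hu; exact habs2 u (by omega)
            apply pack (k - 2) le_rfl
            refine ⟨φ2, ⟨⟨?_, hprop2⟩, ?_, ?_⟩⟩
            · intro u
              rw [mem_colourSet_iff]
              constructor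
              · intro he; exact absurd he (by omega)
              · by_cases hu : u ∈ T
                · rw [hφ2T u hu]; simp
                · rw [hφ2o u hu]
                  have := hlowf u hu
                  omega
            · intro i j hi hj hij
              obtain ⟨hi0, hile⟩ := mem_colourSet_ofNat' hi
              obtain ⟨hj0, hjle⟩ := mem_colourSet_ofNat' hj
              have hile' : i ≤ n - 1 := by omega
              have hjle' : j ≤ n - 1 := by omega
              refine ⟨trans2 i j hile' hjle' 1 ?_, trans2 i j hile' hjle' (-1) ?_⟩
              · exact Stpf i j hile' hjle' (fun _ => by omega) (fun _ => by omega)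
                  hij 1 (Or.inl rfl)
              · exact Stpf i j hile' hjle' (fun _ => by omega) (fun _ => by omega)
                  hij (-1) (Or.inr rfl)
            · intro i hi1 hi
              obtain ⟨hi0, hile⟩ := mem_colourSet_ofNat' hi
              exact trans2 i i (by omega) (by omega) (-1) (Stdf i hi1 (by omega))
    · -- every top vertex was recoloured : complete (k-2)-colouring
      push_neg at hT
      have hall : ∀ u, (φf u).natAbs ≤ n - 1 := by
        intro u
        apply hlowf
        rintro ⟨h1, h2⟩
        exact hT u h1 h2
      apply pack (k - 2) le_rfl
      refine ⟨φf, ⟨⟨?_, hf3⟩, ?_, ?_⟩⟩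
      · intro u
        rw [mem_colourSet_iff]
        constructor
        · intro he
          have hke : k % 2 = 0 := by omega
          exact hnzf hke u
        · have := hall u; omega
      · intro i j hi hj hij
        obtain ⟨hi0, hile⟩ := mem_colourSet_ofNat' hi
        obtain ⟨hj0, hjle⟩ := mem_colourSet_ofNat' hj
        have hile' : i ≤ n - 1 := by omega
        have hjle' : j ≤ n - 1 := by omega
        exact ⟨Stpf i j hile' hjle' (fun he => hi0 (by omega)) (fun he => hj0 (by omega))
            hij 1 (Or.inl rfl),
          Stpf i j hile' hjle' (fun he => hi0 (by omega)) (fun he => hj0 (by omega))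
            hij (-1) (Or.inr rfl)⟩
      · intro i hi1 hi
        obtain ⟨hi0, hile⟩ := mem_colourSet_ofNat' hi
        exact Stdf i hi1 (by omega)

end Down

/-- For every vertex `v`, `ψ(G,σ) − 2 ≤ ψ(G − v, σ) ≤ ψ(G,σ)`. -/
theorem statement7 {V : Type*} [Fintype V] (G : SimpleGraph V) (σ : V → V → ℤ)
    (hσ : IsSignature σ) (v : V) :
    psi G σ - 2 ≤ psi (G.induce {u | u ≠ v}) (fun a b => σ a.1 b.1) ∧
    psi (G.induce {u | u ≠ v}) (fun a b => σ a.1 b.1) ≤ psi G σ := by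
  classical
  constructor
  · rw [tsub_le_iff_right]
    by_cases hne : {k | AdmitsComplete G σ k}.Nonempty
    · unfold psi
      apply csSup_le hne
      intro k hk
      by_cases hk3 : 3 ≤ k
      · obtain ⟨k', hk', hadm⟩ := admits_down G σ v k hk3 hk
        have hle : k' ≤ sSup {k | AdmitsComplete (G.induce {u | u ≠ v})
            (fun a b => σ a.1 b.1) k} :=
          le_csSup (bddAbove_admits _ _) hadm
        omega
      · omega
    · rw [Set.not_nonempty_iff_eq_empty] at hne
      unfold psi
      rw [hne, csSup_empty]
      exact bot_le
  · by_cases hne : {k | AdmitsComplete (G.induce {u | u ≠ v})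
        (fun a b => σ a.1 b.1) k}.Nonempty
    · unfold psi
      apply csSup_le hne
      intro k hk
      rcases admits_up G σ hσ v k hk with h | h
      · exact le_csSup (bddAbove_admits G σ) h
      · have := le_csSup (bddAbove_admits G σ) h
        omega
    · rw [Set.not_nonempty_iff_eq_empty] at hne
      unfold psi
      rw [hne, csSup_empty]
      exact bot_le
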